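/- arXiv:1508.06343 — 4 statements merged into one kernel-verified Lean document; each statement's English description precedes it below -/
import Mathlib

section
/- For a subtraction game S(X) with subtraction set X and k = min(X), the normal-play Sprague-Grundy value satisfies: G(x) = 0 if and only if G(x+k) = 1, for all non-negative integers x. -/
/-- Minimum excludant: least natural number not in `S`. -/
noncomputable def mex (S : Set ℕ) : ℕ := sInf {n | n ∉ S}

lemma mex_eq_zero_of_not_mem {S : Set ℕ} (h : 0 ∉ S) : mex S = 0 :=
  Nat.eq_zero_of_le_zero (Nat.sInf_le h)

lemma not_mem_of_mex_eq_zero {S : Set ℕ} (hfin : ∃ n, n ∉ S) (h : mex S = 0) : 0 ∉ S := by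
  have hne : {n | n ∉ S}.Nonempty := hfin
  have hmem := Nat.sInf_mem hne
  rwa [show sInf {n | n ∉ S} = 0 from h] at hmem

lemma mex_eq_one {S : Set ℕ} (h0 : 0 ∈ S) (h1 : 1 ∉ S) : mex S = 1 := by
  refine le_antisymm (Nat.sInf_le h1) ?_
  rcases Nat.eq_zero_or_pos (sInf {n | n ∉ S}) with h | h
  · exfalso
    have hne : {n | n ∉ S}.Nonempty := ⟨1, h1⟩
    have hmem := Nat.sInf_mem hne
    rw [h] at hmem
    exact hmem h0
  · exact h

lemma of_mex_eq_one {S : Set ℕ} (h : mex S = 1) : 0 ∈ S ∧ 1 ∉ S := by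
  constructor
  · by_contra h0
    have := Nat.sInf_le (show 0 ∈ {n | n ∉ S} from h0)
    rw [show sInf {n | n ∉ S} = mex S from rfl, h] at this
    omega
  · have hne : {n | n ∉ S}.Nonempty := by
      by_contra hne
      have he : {n | n ∉ S} = ∅ := Set.not_nonempty_iff_eq_empty.mp hne
      rw [mex, he, Nat.sInf_empty] at h
      omega
    have hmem := Nat.sInf_mem hne
    rwa [show sInf {n | n ∉ S} = 1 from h] at hmem

/-- Ferguson's lemma for subtraction games: `G x = 0 ↔ G (x + k) = 1`
where `k = min X`. -/
theorem subtraction_game_zero_iff_plus_min_one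
    (X : Set ℕ) (k : ℕ)
    (hpos : ∀ s ∈ X, 0 < s)
    (hk : k ∈ X) (hmin : ∀ s ∈ X, k ≤ s)
    (G : ℕ → ℕ)
    (hG : ∀ n, G n = mex {m | ∃ s ∈ X, s ≤ n ∧ m = G (n - s)}) :
    ∀ x : ℕ, G x = 0 ↔ G (x + k) = 1 := by
  have hk0 : 0 < k := hpos k hk
  -- the option set of any position has something outside it (it is finite)
  have hfin : ∀ n : ℕ, ∃ m, m ∉ {m | ∃ s ∈ X, s ≤ n ∧ m = G (n - s)} := by
    intro n
    have hsub : {m | ∃ s ∈ X, s ≤ n ∧ m = G (n - s)} ⊆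
        ↑((Finset.range (n + 1)).image G) := by
      rintro m ⟨s, hs, hsn, rfl⟩
      simp only [Finset.coe_image, Finset.coe_range, Set.mem_image, Set.mem_Iio]
      exact ⟨n - s, by omega, rfl⟩
    have hF : {m | ∃ s ∈ X, s ≤ n ∧ m = G (n - s)}.Finite :=
      (Finset.finite_toSet _).subset hsub
    obtain ⟨m, hm⟩ := hF.infinite_compl.nonempty
    exact ⟨m, hm⟩
  -- positions below k are losing
  have hsmall : ∀ t, t < k → G t = 0 := by
    intro t ht
    rw [hG t]
    apply mex_eq_zero_of_not_mem
    rintro ⟨s, hs, hst, -⟩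
    have := hmin s hs
    omega
  intro x
  induction x using Nat.strong_induction_on with
  | _ x ih =>
    constructor
    · intro hx
      rw [hG (x + k)]
      apply mex_eq_one
      · refine ⟨k, hk, by omega, ?_⟩
        rw [Nat.add_sub_cancel, hx]
      · rintro ⟨s, hs, hsle, heq⟩
        have hspos := hpos s hs
        have hsk := hmin s hs
        by_cases hsx : s ≤ x
        · have hrw : x + k - s = x - s + k := by omega
          rw [hrw] at heq
          have hlt : x - s < x := by omega
          have h0 : G (x - s) = 0 := (ih (x - s) hlt).mpr heq.symm
          have hnot : 0 ∉ {m | ∃ s ∈ X, s ≤ x ∧ m = G (x - s)} :=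
            not_mem_of_mex_eq_zero (hfin x) (by rw [← hG x]; exact hx)
          exact hnot ⟨s, hs, hsx, h0.symm⟩
        · have ht : x + k - s < k := by omega
          have := hsmall (x + k - s) ht
          omega
    · intro hx1
      rw [hG x]
      apply mex_eq_zero_of_not_mem
      rintro ⟨s, hs, hsx, heq⟩
      have hspos := hpos s hs
      have hlt : x - s < x := by omega
      have h1 : G (x - s + k) = 1 := (ih (x - s) hlt).mp heq.symm
      rw [hG (x + k)] at hx1
      have hnot := (of_mex_eq_one hx1).2
      refine hnot ⟨s, hs, by omega, ?_⟩
      rw [show x + k - s = x - s + k by omega, h1]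
end

section
/- In any subtraction game S(X), every position x with G(x) = 0 which is non-terminal (i.e., some s ∈ X satisfies s ≤ x) has a move to a position x - s with G(x - s) = 1. -/
lemma mex_not_mem {S : Set ℕ} (h : {n | n ∉ S}.Nonempty) : mex S ∉ S :=
  Nat.sInf_mem h

lemma mem_of_lt_mex {S : Set ℕ} {m : ℕ} (h : m < mex S) : m ∈ S := by
  by_contra hm
  exact absurd (Nat.sInf_le hm) (not_le.mpr h)

lemma moves_compl_nonempty (X : Set ℕ) (G : ℕ → ℕ) (n : ℕ) :
    {m | m ∉ {m | ∃ s ∈ X, s ≤ n ∧ m = G (n - s)}}.Nonempty := by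
  refine ⟨(Finset.range (n+1)).sup G + 1, ?_⟩
  rintro ⟨s, hs, hsn, heq⟩
  have : G (n - s) ≤ (Finset.range (n+1)).sup G :=
    Finset.le_sup (by simp [Nat.lt_succ_iff])
  omega

set_option linter.unusedSectionVars false

section

variable (X : Set ℕ) (k : ℕ)
    (hpos : ∀ s ∈ X, 0 < s)
    (hk : k ∈ X) (hmin : ∀ s ∈ X, k ≤ s)
    (G : ℕ → ℕ)
    (hG : ∀ n, G n = mex {m | ∃ s ∈ X, s ≤ n ∧ m = G (n - s)})

include hpos hk hmin hG

/-- A terminal position has Grundy value 0. -/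
lemma terminal_zero {n : ℕ} (h : ¬ ∃ s ∈ X, s ≤ n) : G n = 0 := by
  rw [hG n]
  apply Nat.le_zero.mp
  apply Nat.sInf_le
  intro hmem
  obtain ⟨s, hs, hsn, _⟩ := hmem
  exact h ⟨s, hs, hsn⟩

/-- If `G n = 0` then no move from `n` has value 0. -/
lemma zero_not_move {n : ℕ} (h : G n = 0) :
    (0 : ℕ) ∉ {m | ∃ s ∈ X, s ≤ n ∧ m = G (n - s)} := by
  have := mex_not_mem (moves_compl_nonempty X G n)
  rwa [← hG n, h] at this

/-- Ferguson's pairing property. -/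
lemma ferguson : ∀ n : ℕ, (G n = 0 ↔ G (n + k) = 1) := by
  intro n
  induction n using Nat.strong_induction_on with
  | _ n ih =>
    constructor
    · intro h0
      rw [hG (n + k)]
      apply mex_eq_one
      · exact ⟨k, hk, by omega, by rw [Nat.add_sub_cancel]; exact h0.symm⟩
      · rintro ⟨s, hs, hsle, heq⟩
        by_cases hsn : s ≤ n
        · have hrw : n + k - s = (n - s) + k := by omega
          rw [hrw] at heq
          have hspos : 0 < s := hpos s hs
          have hlt : n - s < n := by omega
          have hm0 : G (n - s) = 0 := (ih (n - s) hlt).mpr heq.symm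
          exact zero_not_move X k hpos hk hmin G hG h0 ⟨s, hs, hsn, hm0.symm⟩
        · -- n + k - s < k, so it is terminal
          have hterm : ¬ ∃ t ∈ X, t ≤ n + k - s := by
            rintro ⟨t, ht, htle⟩
            have := hmin t ht
            omega
          have := terminal_zero X k hpos hk hmin G hG hterm
          omega
    · intro h1
      by_contra hne
      have hpos0 : 0 < G n := Nat.pos_of_ne_zero hne
      rw [hG n] at hpos0
      have h0mem : (0 : ℕ) ∈ {m | ∃ s ∈ X, s ≤ n ∧ m = G (n - s)} :=
        mem_of_lt_mex hpos0
      obtain ⟨s, hs, hsn, h0⟩ := h0mem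
      have hspos : 0 < s := hpos s hs
      have hlt : n - s < n := by omega
      have := (ih (n - s) hlt).mp h0.symm
      have hrw : (n - s) + k = n + k - s := by omega
      rw [hrw] at this
      have hmem : (1 : ℕ) ∈ {m | ∃ t ∈ X, t ≤ n + k ∧ m = G (n + k - t)} :=
        ⟨s, hs, by omega, this.symm⟩
      have hnot := mex_not_mem (moves_compl_nonempty X G (n + k))
      rw [← hG (n + k), h1] at hnot
      exact hnot hmem

end

/-- In any subtraction game, every non-terminal position of SG value 0
has a move to a position of SG value 1. -/
theorem subtraction_game_zero_movable_to_one
    (X : Set ℕ) (k : ℕ)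
    (hpos : ∀ s ∈ X, 0 < s)
    (hk : k ∈ X) (hmin : ∀ s ∈ X, k ≤ s)
    (G : ℕ → ℕ)
    (hG : ∀ n, G n = mex {m | ∃ s ∈ X, s ≤ n ∧ m = G (n - s)}) :
    ∀ x : ℕ, G x = 0 → (∃ s ∈ X, s ≤ x) → ∃ s ∈ X, s ≤ x ∧ G (x - s) = 1 := by
  intro x hx ⟨s0, hs0, hs0x⟩
  have hkx : k ≤ x := le_trans (hmin s0 hs0) hs0x
  set y := x - k with hy
  -- G y ≠ 0 since 0 is not a move value from x
  have hyne : G y ≠ 0 := fun h =>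
    zero_not_move X k hpos hk hmin G hG hx ⟨k, hk, hkx, h.symm⟩
  -- y is non-terminal (else G y = 0)
  have hynt : ∃ t ∈ X, t ≤ y := by
    by_contra h
    exact hyne (terminal_zero X k hpos hk hmin G hG h)
  -- so 0 is a move value from y
  have hpos0 : 0 < G y := Nat.pos_of_ne_zero hyne
  rw [hG y] at hpos0
  obtain ⟨t, ht, hty, h0⟩ :
      (0 : ℕ) ∈ {m | ∃ s ∈ X, s ≤ y ∧ m = G (y - s)} := mem_of_lt_mex hpos0
  -- Ferguson: G (y - t) = 0 gives G ((y - t) + k) = 1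
  have h1 := (ferguson X k hpos hk hmin G hG (y - t)).mp h0.symm
  have hrw : (y - t) + k = x - t := by omega
  rw [hrw] at h1
  exact ⟨t, ht, by omega, h1⟩
end

section
/- A finite acyclic impartial game has no (0,0)-position if and only if it has neither a (0,0)-position nor a (1,1)-position. -/
/-- Swap 0 and 1, fix everything else. -/
def swap2 (n : ℕ) : ℕ := if n = 0 then 1 else if n = 1 then 0 else n

lemma swap2_zero : swap2 0 = 1 := rfl
lemma swap2_one : swap2 1 = 0 := rfl
lemma swap2_of_two_le {n : ℕ} (h : 2 ≤ n) : swap2 n = n := by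
  rcases n with _ | _ | n <;> simp [swap2] at h ⊢

lemma swap2_eq_zero_iff {n : ℕ} : swap2 n = 0 ↔ n = 1 := by
  rcases n with _ | _ | n <;> simp [swap2]

lemma mex_eq (S : Set ℕ) (k : ℕ) (h1 : k ∉ S) (h2 : ∀ j < k, j ∈ S) :
    mex S = k := by
  refine le_antisymm (Nat.sInf_le h1) ?_
  by_contra h
  push_neg at h
  have hmem : sInf {n | n ∉ S} ∈ {n | n ∉ S} :=
    Nat.sInf_mem ⟨k, h1⟩
  exact hmem (h2 _ h)

lemma mex_spec (S : Set ℕ) (hS : S.Finite) :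
    mex S ∉ S ∧ ∀ j < mex S, j ∈ S := by
  have hne : {n | n ∉ S}.Nonempty := by
    obtain ⟨n, hn⟩ := hS.exists_notMem
    exact ⟨n, hn⟩
  constructor
  · exact Nat.sInf_mem hne
  · intro j hj
    by_contra hjS
    exact absurd (Nat.sInf_le hjS) (not_le.mpr hj)

lemma mem_swap2_image {S : Set ℕ} {n : ℕ} :
    n ∈ swap2 '' S ↔ swap2 n ∈ S := by
  constructor
  · rintro ⟨a, ha, rfl⟩
    have : swap2 (swap2 a) = a := by rcases a with _ | _ | a <;> simp [swap2]
    rwa [this]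
  · intro h
    exact ⟨swap2 n, h, by rcases n with _ | _ | n <;> simp [swap2]⟩

lemma mex_swap (S : Set ℕ) (hfin : S.Finite)
    (hbad : ¬ (mex S = 0 ∧ mex (swap2 '' S) = 0)) :
    mex (swap2 '' S) = swap2 (mex S) := by
  obtain ⟨hm, hlt⟩ := mex_spec S hfin
  set m := mex S with hmdef
  rcases Nat.lt_or_ge m 2 with h2 | h2
  · interval_cases m
    · -- m = 0 : 0 ∉ S
      by_cases h1 : 1 ∈ S
      · rw [swap2_zero]
        refine mex_eq _ 1 ?_ ?_
        · rw [mem_swap2_image, swap2_one]; exact hm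
        · intro j hj
          interval_cases j
          rw [mem_swap2_image, swap2_zero]; exact h1
      · exfalso
        apply hbad
        refine ⟨rfl, mex_eq _ 0 ?_ (by omega)⟩
        rw [mem_swap2_image, swap2_zero]; exact h1
    · -- m = 1 : 0 ∈ S, 1 ∉ S
      rw [swap2_one]
      refine mex_eq _ 0 ?_ (by omega)
      rw [mem_swap2_image, swap2_zero]; exact hm
  · rw [swap2_of_two_le h2]
    refine mex_eq _ m ?_ ?_
    · rw [mem_swap2_image, swap2_of_two_le h2]; exact hm
    · intro j hj
      rw [mem_swap2_image]
      rcases Nat.lt_or_ge j 2 with hj2 | hj2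
      · interval_cases j
        · rw [swap2_zero]; exact hlt 1 (by omega)
        · rw [swap2_one]; exact hlt 0 (by omega)
      · rw [swap2_of_two_le hj2]; exact hlt j hj

/-- A finite acyclic impartial game has no `(0,0)`-position iff it has
neither a `(0,0)`-position nor a `(1,1)`-position. -/
theorem no_00_iff_no_00_no_11
    (V : Type*) [Fintype V] (move : V → V → Prop)
    (hacyclic : WellFounded (fun y x => move x y))
    (G Gm : V → ℕ)
    (hG : ∀ x, G x = mex {v | ∃ y, move x y ∧ v = G y})
    (hGmT : ∀ x, (∀ y, ¬ move x y) → Gm x = 1)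
    (hGm : ∀ x, (∃ y, move x y) → Gm x = mex {v | ∃ y, move x y ∧ v = Gm y}) :
    (∀ x, ¬ (G x = 0 ∧ Gm x = 0)) ↔
      (∀ x, ¬ (G x = 0 ∧ Gm x = 0) ∧ ¬ (G x = 1 ∧ Gm x = 1)) := by
  constructor
  · intro H
    -- key claim: Gm x = swap2 (G x) for all x
    have key : ∀ x, Gm x = swap2 (G x) := by
      intro x
      induction x using hacyclic.induction with
      | _ x IH =>
        by_cases hterm : ∃ y, move x y
        · have hS : ({v | ∃ y, move x y ∧ v = G y} : Set ℕ).Finite := by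
            apply Set.Finite.subset (Set.finite_range G)
            rintro v ⟨y, _, rfl⟩
            exact ⟨y, rfl⟩
          have himg : {v | ∃ y, move x y ∧ v = Gm y}
              = swap2 '' {v | ∃ y, move x y ∧ v = G y} := by
            ext v
            constructor
            · rintro ⟨y, hy, rfl⟩
              exact ⟨G y, ⟨y, hy, rfl⟩, (IH y hy).symm⟩
            · rintro ⟨w, ⟨y, hy, rfl⟩, rfl⟩
              exact ⟨y, hy, (IH y hy).symm⟩
          rw [hGm x hterm, himg, hG x]
          apply mex_swap _ hS
          rintro ⟨h0, h0'⟩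
          exact H x ⟨by rw [hG x]; exact h0,
            by rw [hGm x hterm, himg]; exact h0'⟩
        · push_neg at hterm
          have hGx : G x = 0 := by
            rw [hG x]
            refine mex_eq _ 0 ?_ (by omega)
            rintro ⟨y, hy, -⟩
            exact hterm y hy
          rw [hGx, swap2_zero, hGmT x hterm]
    intro x
    refine ⟨H x, ?_⟩
    rintro ⟨h1, h2⟩
    rw [key x, h1, swap2_one] at h2
    exact one_ne_zero h2.symm
  · intro H x
    exact (H x).1
end

section
/- In the game Mark, the position 8 satisfies G(8) = 0 and G⁻(8) = 2; hence Mark is not a domestic game. -/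
lemma mex_pair (a b m : ℕ) (ha : m ≠ a) (hb : m ≠ b)
    (h : ∀ k < m, k = a ∨ k = b) : mex ({a, b} : Set ℕ) = m := by
  have hm : m ∈ {n | n ∉ ({a, b} : Set ℕ)} := by
    simp [Set.mem_insert_iff, ha, hb]
  have hle : sInf {n | n ∉ ({a, b} : Set ℕ)} ≤ m := Nat.sInf_le hm
  have hmem := Nat.sInf_mem ⟨m, hm⟩
  rcases lt_or_eq_of_le hle with hlt | heq
  · rcases h _ hlt with he | he
    · exact absurd (by rw [he]; exact Set.mem_insert _ _) hmem
    · exact absurd (by rw [he]; exact Set.mem_insert_iff.mpr (Or.inr rfl)) hmem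
  · exact heq

lemma mex_single (a m : ℕ) (ha : m ≠ a) (h : ∀ k < m, k = a) :
    mex ({a} : Set ℕ) = m := by
  rw [← Set.pair_eq_singleton a]
  exact mex_pair a a m ha ha (fun k hk => Or.inl (h k hk))

/-- In Fraenkel's game Mark, `8` is a `(0,2)`-position; hence Mark is not
domestic. -/
theorem mark_not_domestic
    (G Gm : ℕ → ℕ)
    (hG0 : G 0 = 0)
    (hG : ∀ n : ℕ, 1 ≤ n → G n = mex {G (n - 1), G (n / 2)})
    (hGm0 : Gm 0 = 1)
    (hGm : ∀ n : ℕ, 1 ≤ n → Gm n = mex {Gm (n - 1), Gm (n / 2)}) :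
    G 8 = 0 ∧ Gm 8 = 2 ∧
    ¬ (∀ n : ℕ, ¬ (G n = 0 ∧ 2 ≤ Gm n) ∧ ¬ (2 ≤ G n ∧ Gm n = 0)) := by
  have hG1 : G 1 = 1 := by
    rw [hG 1 (by norm_num)]; norm_num [hG0]
    exact mex_single 0 1 (by norm_num) (by omega)
  have hG2 : G 2 = 0 := by
    rw [hG 2 (by norm_num)]; norm_num [hG1]
    exact mex_single 1 0 (by norm_num) (by omega)
  have hG3 : G 3 = 2 := by
    rw [hG 3 (by norm_num)]; norm_num [hG1, hG2]
    exact mex_pair 0 1 2 (by norm_num) (by norm_num) (by omega)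
  have hG4 : G 4 = 1 := by
    rw [hG 4 (by norm_num)]; norm_num [hG2, hG3]
    exact mex_pair 2 0 1 (by norm_num) (by norm_num) (by omega)
  have hG5 : G 5 = 2 := by
    rw [hG 5 (by norm_num)]; norm_num [hG2, hG4]
    exact mex_pair 1 0 2 (by norm_num) (by norm_num) (by omega)
  have hG6 : G 6 = 0 := by
    rw [hG 6 (by norm_num)]; norm_num [hG3, hG5]
    exact mex_single 2 0 (by norm_num) (by omega)
  have hG7 : G 7 = 1 := by
    rw [hG 7 (by norm_num)]; norm_num [hG3, hG6]
    exact mex_pair 0 2 1 (by norm_num) (by norm_num) (by omega)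
  have hG8 : G 8 = 0 := by
    rw [hG 8 (by norm_num)]; norm_num [hG4, hG7]
    exact mex_single 1 0 (by norm_num) (by omega)
  have hGm1 : Gm 1 = 0 := by
    rw [hGm 1 (by norm_num)]; norm_num [hGm0]
    exact mex_single 1 0 (by norm_num) (by omega)
  have hGm2 : Gm 2 = 1 := by
    rw [hGm 2 (by norm_num)]; norm_num [hGm1]
    exact mex_single 0 1 (by norm_num) (by omega)
  have hGm3 : Gm 3 = 2 := by
    rw [hGm 3 (by norm_num)]; norm_num [hGm1, hGm2]
    exact mex_pair 1 0 2 (by norm_num) (by norm_num) (by omega)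
  have hGm4 : Gm 4 = 0 := by
    rw [hGm 4 (by norm_num)]; norm_num [hGm2, hGm3]
    exact mex_pair 2 1 0 (by norm_num) (by norm_num) (by omega)
  have hGm5 : Gm 5 = 2 := by
    rw [hGm 5 (by norm_num)]; norm_num [hGm2, hGm4]
    exact mex_pair 0 1 2 (by norm_num) (by norm_num) (by omega)
  have hGm6 : Gm 6 = 0 := by
    rw [hGm 6 (by norm_num)]; norm_num [hGm3, hGm5]
    exact mex_single 2 0 (by norm_num) (by omega)
  have hGm7 : Gm 7 = 1 := by
    rw [hGm 7 (by norm_num)]; norm_num [hGm3, hGm6]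
    exact mex_pair 0 2 1 (by norm_num) (by norm_num) (by omega)
  have hGm8 : Gm 8 = 2 := by
    rw [hGm 8 (by norm_num)]; norm_num [hGm4, hGm7]
    exact mex_pair 1 0 2 (by norm_num) (by norm_num) (by omega)
  refine ⟨hG8, hGm8, fun h => ?_⟩
  exact (h 8).1 ⟨hG8, by omega⟩
end
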